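/- arXiv:2604.17582 — 4 statements merged into one kernel-verified Lean document; each statement's English description precedes it below -/
import Mathlib

section
/- (Ky Fan) For any Hermitian matrix C ∈ C^{N×N} and any 1 ≤ M ≤ N, the sum of the M largest eigenvalues of C equals the maximum of tr(Uᴴ C U) over all U ∈ C^{N×M} satisfying Uᴴ U = I_M; moreover, the maximum is attained when the columns of U are orthonormal eigenvectors corresponding to the M largest eigenvalues of C. -/
open Matrix
open scoped ComplexOrder

private lemma kyfan_filter_eq_map {N M : ℕ} (hMN : M ≤ N) :
    Finset.univ.filter (fun i : Fin N => (i : ℕ) < M) =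
      Finset.univ.map (Fin.castLEEmb hMN) := by
  ext k
  rw [Finset.mem_filter, Finset.mem_map]
  constructor
  · rintro ⟨-, hk⟩; exact ⟨⟨(k : ℕ), hk⟩, Finset.mem_univ _, by ext; rfl⟩
  · rintro ⟨j, -, rfl⟩; exact ⟨Finset.mem_univ _, j.isLt⟩

private lemma kyfan_sum_mul_le {N : ℕ} (lam s : Fin N → ℝ) (T : Finset (Fin N)) (t : ℝ)
    (hT1 : ∀ k ∈ T, t ≤ lam k) (hT2 : ∀ k ∉ T, lam k ≤ t)
    (hs0 : ∀ k, 0 ≤ s k) (hs1 : ∀ k, s k ≤ 1)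
    (hsum : ∑ k, s k = (T.card : ℝ)) :
    ∑ k, lam k * s k ≤ ∑ k ∈ T, lam k := by
  have hsplit : ∑ k ∈ T, s k + ∑ k ∈ Tᶜ, s k = (T.card : ℝ) := by
    rw [Finset.sum_add_sum_compl]; exact hsum
  have h1 : ∑ k ∈ T, lam k * (s k - 1) ≤ ∑ k ∈ T, t * (s k - 1) :=
    Finset.sum_le_sum fun k hk =>
      mul_le_mul_of_nonpos_right (hT1 k hk) (sub_nonpos.2 (hs1 k))
  have h2 : ∑ k ∈ Tᶜ, lam k * s k ≤ ∑ k ∈ Tᶜ, t * s k :=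
    Finset.sum_le_sum fun k hk =>
      mul_le_mul_of_nonneg_right (hT2 k (by simpa using hk)) (hs0 k)
  have e1 : ∑ k, lam k * s k
      = ∑ k ∈ T, lam k + (∑ k ∈ T, lam k * (s k - 1) + ∑ k ∈ Tᶜ, lam k * s k) := by
    rw [← Finset.sum_add_sum_compl T (fun k => lam k * s k)]
    have h3 : ∑ k ∈ T, lam k * s k = ∑ k ∈ T, (lam k + lam k * (s k - 1)) :=
      Finset.sum_congr rfl fun k _ => by ring
    rw [h3, Finset.sum_add_distrib]
    ring
  have e2 : ∑ k ∈ T, t * (s k - 1) + ∑ k ∈ Tᶜ, t * s k = 0 := by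
    rw [← Finset.mul_sum, ← Finset.mul_sum, ← mul_add]
    have : ∑ k ∈ T, (s k - 1) = ∑ k ∈ T, s k - T.card := by
      rw [Finset.sum_sub_distrib, Finset.sum_const, nsmul_eq_mul, mul_one]
    rw [this]
    have h0 : ∑ k ∈ T, s k - (T.card : ℝ) + ∑ k ∈ Tᶜ, s k = 0 := by linarith
    rw [h0, mul_zero]
  linarith [h1, h2, e1, e2]

private lemma kyfan_trace_eig {N M : ℕ} (hMN : M ≤ N) (C : Matrix (Fin N) (Fin N) ℂ)
    (μ : Fin N → ℝ) (U : Matrix (Fin N) (Fin M) ℂ) (hU : Uᴴ * U = 1)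
    (heig : ∀ j : Fin M, C *ᵥ (fun i => U i j) =
      ((μ (Fin.castLE hMN j) : ℂ)) • (fun i => U i j)) :
    (Matrix.trace (Uᴴ * C * U)).re = ∑ j : Fin M, μ (Fin.castLE hMN j) := by
  have hcol : ∀ j i, (C * U) i j = (μ (Fin.castLE hMN j) : ℂ) * U i j := by
    intro j i
    have h := congrFun (heig j) i
    simpa [Matrix.mulVec, dotProduct, Matrix.mul_apply, smul_eq_mul] using h
  have htr : Matrix.trace (Uᴴ * C * U) = ∑ j : Fin M, (μ (Fin.castLE hMN j) : ℂ) := by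
    rw [Matrix.mul_assoc, Matrix.trace]
    refine Finset.sum_congr rfl fun j _ => ?_
    have h1 : Matrix.diag (Uᴴ * (C * U)) j
        = ∑ i, star (U i j) * ((μ (Fin.castLE hMN j) : ℂ) * U i j) := by
      simp only [Matrix.diag, Matrix.mul_apply, conjTranspose_apply]
      exact Finset.sum_congr rfl fun i _ => by rw [← Matrix.mul_apply, hcol]
    rw [h1]
    have h2 : ∑ i, star (U i j) * ((μ (Fin.castLE hMN j) : ℂ) * U i j)
        = (μ (Fin.castLE hMN j) : ℂ) * ∑ i, star (U i j) * U i j := by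
      rw [Finset.mul_sum]; exact Finset.sum_congr rfl fun i _ => by ring
    rw [h2]
    have h3 : ∑ i, star (U i j) * U i j = (Uᴴ * U) j j := by
      simp [Matrix.mul_apply, conjTranspose_apply]
    rw [h3, hU]
    simp [Matrix.one_apply]
  rw [htr]
  simp [Complex.re_sum]

private lemma kyfan_exists_s {N M : ℕ}
    (C : Matrix (Fin N) (Fin N) ℂ) (hC : C.IsHermitian)
    (U : Matrix (Fin N) (Fin M) ℂ) (hU : Uᴴ * U = 1) :
    ∃ s : Fin N → ℝ, (∀ k, 0 ≤ s k) ∧ (∀ k, s k ≤ 1) ∧ (∑ k, s k = (M : ℝ)) ∧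
      (Matrix.trace (Uᴴ * C * U)).re = ∑ k, hC.eigenvalues k * s k := by
  set V : Matrix (Fin N) (Fin N) ℂ := (hC.eigenvectorUnitary : Matrix (Fin N) (Fin N) ℂ) with hV
  have hV2 : V * Vᴴ = 1 := by
    rw [← Matrix.star_eq_conjTranspose]
    exact (Matrix.mem_unitaryGroup_iff).mp hC.eigenvectorUnitary.2
  set W : Matrix (Fin N) (Fin M) ℂ := Vᴴ * U with hW
  set P : Matrix (Fin N) (Fin N) ℂ := W * Wᴴ with hP
  have hWW : Wᴴ * W = 1 := by
    rw [hW, conjTranspose_mul, conjTranspose_conjTranspose, Matrix.mul_assoc,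
      ← Matrix.mul_assoc V, hV2, Matrix.one_mul, hU]
  have hPP : P * P = P := by
    rw [hP, Matrix.mul_assoc, ← Matrix.mul_assoc Wᴴ, hWW, Matrix.one_mul]
  have hPH : Pᴴ = P := by
    rw [hP, conjTranspose_mul, conjTranspose_conjTranspose]
  refine ⟨fun k => (P k k).re, ?_, ?_, ?_, ?_⟩
  · intro k
    show 0 ≤ (P k k).re
    have h : P k k = ∑ j, (Complex.normSq (W k j) : ℂ) := by
      rw [hP, Matrix.mul_apply]
      exact Finset.sum_congr rfl fun j _ => by
        rw [conjTranspose_apply, ← starRingEnd_apply, Complex.mul_conj]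
    rw [h, Complex.re_sum]
    exact Finset.sum_nonneg fun j _ => by simp [Complex.normSq_nonneg]
  · intro k
    show (P k k).re ≤ 1
    set Q : Matrix (Fin N) (Fin N) ℂ := 1 - P with hQ
    have hQH : Qᴴ = Q := by rw [hQ, conjTranspose_sub, hPH, conjTranspose_one]
    have hQQ : Q * Q = Q := by
      rw [hQ, sub_mul, Matrix.one_mul, mul_sub, Matrix.mul_one, hPP, sub_self, sub_zero]
    have key : Q k k = (Qᴴ * Q) k k := by rw [hQH, hQQ]
    have hnn : 0 ≤ (Q k k).re := by
      rw [key, Matrix.mul_apply, Complex.re_sum]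
      refine Finset.sum_nonneg fun j _ => ?_
      rw [conjTranspose_apply, ← starRingEnd_apply, ← Complex.normSq_eq_conj_mul_self]
      simp [Complex.normSq_nonneg]
    have hQk : (Q k k).re = 1 - (P k k).re := by
      rw [hQ]; simp [Matrix.sub_apply, Matrix.one_apply]
    linarith
  · have htr : Matrix.trace P = Matrix.trace (Wᴴ * W) := by
      rw [hP, Matrix.trace_mul_comm]
    rw [hWW, Matrix.trace_one] at htr
    have h : ∑ k, (P k k).re = (Matrix.trace P).re := by
      rw [Matrix.trace, Complex.re_sum]; rfl
    rw [h, htr]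
    simp
  · have hC' : Uᴴ * C * U = (Wᴴ : Matrix (Fin M) (Fin N) ℂ) * (diagonal (RCLike.ofReal ∘ hC.eigenvalues) : Matrix (Fin N) (Fin N) ℂ) * W := by
      rw [hW, conjTranspose_mul, conjTranspose_conjTranspose]
      conv_lhs => rw [hC.spectral_theorem, Unitary.conjStarAlgAut_apply]
      rw [← Matrix.star_eq_conjTranspose V]
      simp only [Matrix.mul_assoc, hV]
    rw [hC', Matrix.trace_mul_comm, ← Matrix.mul_assoc, Matrix.trace_mul_comm]
    rw [Matrix.trace, Complex.re_sum]
    refine Finset.sum_congr rfl fun k _ => ?_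
    rw [Matrix.diag_apply, Matrix.diagonal_mul]
    simp [Complex.mul_re, RCLike.ofReal_alg]
    exact Or.inl rfl

/-- Ky Fan: for Hermitian `C` and `1 ≤ M ≤ N`, the sum of the `M` largest eigenvalues
of `C` (given via an antitone arrangement `μ` of the eigenvalues) is the maximum of
`tr(Uᴴ C U)` over `U` with orthonormal columns; moreover, the maximum is attained
whenever the columns of `U` are orthonormal eigenvectors for the `M` largest
eigenvalues. -/
theorem stmt_2 {N M : ℕ} (hM : 1 ≤ M) (hMN : M ≤ N)
    (C : Matrix (Fin N) (Fin N) ℂ) (hC : C.IsHermitian)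
    (μ : Fin N → ℝ) (hμ : Antitone μ)
    (σ : Equiv.Perm (Fin N)) (hμσ : μ = hC.eigenvalues ∘ σ) :
    IsGreatest {x : ℝ | ∃ U : Matrix (Fin N) (Fin M) ℂ,
        Uᴴ * U = 1 ∧ x = (Matrix.trace (Uᴴ * C * U)).re}
      (∑ i ∈ Finset.univ.filter (fun i : Fin N => (i : ℕ) < M), μ i) ∧
    ∀ U : Matrix (Fin N) (Fin M) ℂ, Uᴴ * U = 1 →
      (∀ j : Fin M, C *ᵥ (fun i => U i j) =
        ((μ (Fin.castLE hMN j) : ℂ)) • (fun i => U i j)) →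
      (Matrix.trace (Uᴴ * C * U)).re =
        ∑ i ∈ Finset.univ.filter (fun i : Fin N => (i : ℕ) < M), μ i := by
  -- rewrite the target sum as a sum over `Fin M`
  have hsum_eq : ∑ i ∈ Finset.univ.filter (fun i : Fin N => (i : ℕ) < M), μ i
      = ∑ j : Fin M, μ (Fin.castLE hMN j) := by
    rw [kyfan_filter_eq_map hMN, Finset.sum_map]
    rfl
  have part2 : ∀ U : Matrix (Fin N) (Fin M) ℂ, Uᴴ * U = 1 →
      (∀ j : Fin M, C *ᵥ (fun i => U i j) =
        ((μ (Fin.castLE hMN j) : ℂ)) • (fun i => U i j)) →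
      (Matrix.trace (Uᴴ * C * U)).re =
        ∑ i ∈ Finset.univ.filter (fun i : Fin N => (i : ℕ) < M), μ i := by
    intro U hU heig
    rw [hsum_eq]
    exact kyfan_trace_eig hMN C μ U hU heig
  refine ⟨⟨?_, ?_⟩, part2⟩
  · -- membership: eigenvector columns
    set b := hC.eigenvectorBasis with hb
    set U0 : Matrix (Fin N) (Fin M) ℂ :=
      fun i j => (b (σ (Fin.castLE hMN j)) : EuclideanSpace ℂ (Fin N)) i with hU0def
    have hU0 : U0ᴴ * U0 = 1 := by
      ext j j'
      have horth := orthonormal_iff_ite.mp b.orthonormal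
        (σ (Fin.castLE hMN j)) (σ (Fin.castLE hMN j'))
      simp only [PiLp.inner_apply, RCLike.inner_apply] at horth
      simp only [Matrix.mul_apply, conjTranspose_apply, Matrix.one_apply]
      simp only [hU0def]
      rw [show ∑ i, star ((b (σ (Fin.castLE hMN j)) : EuclideanSpace ℂ (Fin N)) i) *
          (b (σ (Fin.castLE hMN j')) : EuclideanSpace ℂ (Fin N)) i
          = if σ (Fin.castLE hMN j) = σ (Fin.castLE hMN j') then 1 else 0 from by
        rw [← horth]; exact Finset.sum_congr rfl fun i _ => by rw [starRingEnd_apply, mul_comm]]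
      congr 1
      simp only [eq_iff_iff, EmbeddingLike.apply_eq_iff_eq]
      exact ⟨fun h => Fin.castLE_injective hMN h, fun h => by rw [h]⟩
    have heig0 : ∀ j : Fin M, C *ᵥ (fun i => U0 i j) =
        ((μ (Fin.castLE hMN j) : ℂ)) • (fun i => U0 i j) := by
      intro j
      have h := hC.mulVec_eigenvectorBasis (σ (Fin.castLE hMN j))
      have hμ' : (μ (Fin.castLE hMN j) : ℂ)
          = (hC.eigenvalues (σ (Fin.castLE hMN j)) : ℂ) := by rw [hμσ]; rfl
      rw [hμ']
      exact h
    exact ⟨U0, hU0, (part2 U0 hU0 heig0).symm⟩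
  · -- upper bound
    rintro x ⟨U, hU, rfl⟩
    obtain ⟨s, hs0, hs1, hssum, htr⟩ := kyfan_exists_s C hC U hU
    set lam := hC.eigenvalues with hlam
    set T : Finset (Fin N) :=
      (Finset.univ.filter (fun i : Fin N => (i : ℕ) < M)).image σ with hT
    have hTcard : T.card = M := by
      rw [hT, Finset.card_image_of_injective _ σ.injective, kyfan_filter_eq_map hMN,
        Finset.card_map, Finset.card_univ, Fintype.card_fin]
    have hTsum : ∑ k ∈ T, lam k
        = ∑ i ∈ Finset.univ.filter (fun i : Fin N => (i : ℕ) < M), μ i := by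
      rw [hT, Finset.sum_image (fun x _ y _ h => σ.injective h)]
      exact Finset.sum_congr rfl fun i _ => by rw [hμσ]; rfl
    obtain ⟨m, hmval⟩ : ∃ m : Fin N, (m : ℕ) = M - 1 := ⟨⟨M - 1, by omega⟩, rfl⟩
    have hT1 : ∀ k ∈ T, μ m ≤ lam k := by
      intro k hk
      rw [hT, Finset.mem_image] at hk
      obtain ⟨i, hi, rfl⟩ := hk
      rw [Finset.mem_filter] at hi
      have hi2 : (i : ℕ) < M := hi.2
      have him : i ≤ m := by
        rw [Fin.le_def]; omega
      have : lam (σ i) = μ i := by rw [hμσ]; rfl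
      rw [this]
      exact hμ him
    have hT2 : ∀ k ∉ T, lam k ≤ μ m := by
      intro k hk
      have hk' : σ.symm k ∉ Finset.univ.filter (fun i : Fin N => (i : ℕ) < M) := by
        intro h
        exact hk (by rw [hT]; exact Finset.mem_image.mpr ⟨σ.symm k, h, σ.apply_symm_apply k⟩)
      rw [Finset.mem_filter] at hk'
      push_neg at hk'
      have hge : M ≤ ((σ.symm k : Fin N) : ℕ) := hk' (Finset.mem_univ _)
      have hmi : m ≤ σ.symm k := by rw [Fin.le_def]; omega
      have : lam k = μ (σ.symm k) := by
        rw [hμσ]; simp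
      rw [this]
      exact hμ hmi
    have hub := kyfan_sum_mul_le lam s T (μ m) hT1 hT2 hs0 hs1 (by rw [hTcard]; exact hssum)
    rw [htr, ← hTsum]
    exact hub
end

section
/- Let C ∈ C^{N×N} be Hermitian and 1 ≤ M ≤ N. Then the maximum of tr(R C) over all Hermitian matrices R ∈ C^{N×N} that are orthogonal projection matrices (R² = R, Rᴴ = R) of rank M equals the sum of the M largest eigenvalues of C. -/
open Matrix
open scoped ComplexOrder

private lemma cardF' {N M : ℕ} (hMN : M ≤ N) :
    (Finset.univ.filter (fun i : Fin N => (i : ℕ) < M)).card = M := by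
  rw [Finset.card_filter]
  rw [Fin.sum_univ_eq_sum_range (fun i => if i < M then 1 else 0) N]
  rw [← Finset.sum_filter]
  have : Finset.filter (fun x => x < M) (Finset.range N) = Finset.range M := by
    ext x; simp; omega
  simp [this]

private lemma key' {N M : ℕ} (hM : 1 ≤ M) (hMN : M ≤ N) (μ t : Fin N → ℝ) (hμ : Antitone μ)
    (h0 : ∀ i, 0 ≤ t i) (h1 : ∀ i, t i ≤ 1) (hsum : ∑ i, t i = M) :
    ∑ i, μ i * t i ≤ ∑ i ∈ Finset.univ.filter (fun i : Fin N => (i : ℕ) < M), μ i := by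
  set F := Finset.univ.filter (fun i : Fin N => (i : ℕ) < M) with hF
  have hMpos : M - 1 < N := by omega
  set c : ℝ := μ ⟨M - 1, hMpos⟩ with hc
  have hle1 : ∀ i ∈ F, μ i * t i ≤ μ i + c * (t i - 1) := by
    intro i hi
    have hiM : (i : ℕ) < M := by simpa [hF] using hi
    have hci : c ≤ μ i := hμ (by simp [Fin.le_def]; omega)
    nlinarith [h1 i, h0 i]
  have hle2 : ∀ i ∈ Fᶜ, μ i * t i ≤ c * t i := by
    intro i hi
    have hiM : ¬ (i : ℕ) < M := by simpa [hF] using hi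
    have hci : μ i ≤ c := hμ (by simp [Fin.le_def]; omega)
    nlinarith [h0 i]
  have hsplit : ∑ i, μ i * t i = ∑ i ∈ F, μ i * t i + ∑ i ∈ Fᶜ, μ i * t i :=
    (Finset.sum_add_sum_compl F _).symm
  have hsplit2 : ∑ i, t i = ∑ i ∈ F, t i + ∑ i ∈ Fᶜ, t i :=
    (Finset.sum_add_sum_compl F _).symm
  have hcard : (F.card : ℝ) = M := by rw [hF, cardF' hMN]
  calc ∑ i, μ i * t i ≤ (∑ i ∈ F, (μ i + c * (t i - 1))) + ∑ i ∈ Fᶜ, c * t i := by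
        rw [hsplit]; exact add_le_add (Finset.sum_le_sum hle1) (Finset.sum_le_sum hle2)
    _ = ∑ i ∈ F, μ i + c * (∑ i, t i - F.card) := by
        rw [Finset.sum_add_distrib, ← Finset.mul_sum, ← Finset.mul_sum, hsplit2]
        rw [Finset.sum_sub_distrib]
        simp [mul_sub, mul_add]; ring
    _ = ∑ i ∈ F, μ i := by rw [hsum, hcard]; simp

private lemma eig01' {N : ℕ} {R : Matrix (Fin N) (Fin N) ℂ} (hR : R.IsHermitian)
    (hP : R * R = R) : ∀ i, hR.eigenvalues i = 0 ∨ hR.eigenvalues i = 1 := by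
  intro i
  have h := (by have h' := hR.conjStarAlgAut_star_eigenvectorUnitary; rwa [Unitary.conjStarAlgAut_apply, Unitary.coe_star, star_star] at h')
  set U : Matrix (Fin N) (Fin N) ℂ := (hR.eigenvectorUnitary : Matrix (Fin N) (Fin N) ℂ) with hU
  have hUU : U * star U = 1 := by
    simpa [hU] using Unitary.mul_star_self_of_mem hR.eigenvectorUnitary.2
  have h2 : (star U * R * U) * (star U * R * U) = star U * R * U := by
    calc (star U * R * U) * (star U * R * U) = star U * R * (U * star U) * R * U := by
          noncomm_ring
      _ = star U * (R * R) * U := by rw [hUU]; noncomm_ring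
      _ = star U * R * U := by rw [hP]
  rw [h, Matrix.diagonal_mul_diagonal] at h2
  have h3 := congrFun (congrArg (fun A => Matrix.diag A) h2) i
  simp only [Matrix.diag_apply, Matrix.diagonal_apply_eq, Pi.mul_apply,
    Function.comp_apply] at h3
  have h4 : hR.eigenvalues i * hR.eigenvalues i = hR.eigenvalues i := by exact_mod_cast h3
  have h5 : hR.eigenvalues i * (hR.eigenvalues i - 1) = 0 := by nlinarith [h4]
  rcases mul_eq_zero.mp h5 with h | h
  · exact Or.inl h
  · exact Or.inr (by linarith)

private lemma trace_re' {N : ℕ} {R : Matrix (Fin N) (Fin N) ℂ} (hR : R.IsHermitian) :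
    (Matrix.trace R).re = ∑ i, hR.eigenvalues i := by
  set U : Matrix (Fin N) (Fin N) ℂ := (hR.eigenvectorUnitary : Matrix (Fin N) (Fin N) ℂ) with hU
  have hUU : star U * U = 1 := by
    simpa [hU] using Unitary.star_mul_self_of_mem hR.eigenvectorUnitary.2
  have h : Matrix.trace R = ∑ i, (hR.eigenvalues i : ℂ) := by
    conv_lhs => rw [hR.spectral_theorem, Unitary.conjStarAlgAut_apply]
    rw [Matrix.trace_mul_cycle, ← hU, hUU, one_mul, Matrix.trace_diagonal]
    rfl
  rw [h]; simp

private lemma trace_eq_rank' {N : ℕ} {R : Matrix (Fin N) (Fin N) ℂ} (hR : R.IsHermitian)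
    (hP : R * R = R) : (Matrix.trace R).re = R.rank := by
  rw [trace_re' hR, hR.rank_eq_card_non_zero_eigs, Fintype.card_subtype, Finset.card_filter]
  push_cast
  apply Finset.sum_congr rfl
  intro i _
  rcases eig01' hR hP i with h | h <;> simp [h]

/-- The maximum of `tr(R C)` over Hermitian orthogonal projection matrices `R` of
rank `M` equals the sum of the `M` largest eigenvalues of the Hermitian matrix `C`. -/
theorem stmt_3 {N M : ℕ} (hM : 1 ≤ M) (hMN : M ≤ N)
    (C : Matrix (Fin N) (Fin N) ℂ) (hC : C.IsHermitian)
    (μ : Fin N → ℝ) (hμ : Antitone μ)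
    (σ : Equiv.Perm (Fin N)) (hμσ : μ = hC.eigenvalues ∘ σ) :
    IsGreatest {x : ℝ | ∃ R : Matrix (Fin N) (Fin N) ℂ,
        R.IsHermitian ∧ R * R = R ∧ R.rank = M ∧ x = (Matrix.trace (R * C)).re}
      (∑ i ∈ Finset.univ.filter (fun i : Fin N => (i : ℕ) < M), μ i) := by
  classical
  set V : Matrix (Fin N) (Fin N) ℂ := (hC.eigenvectorUnitary : Matrix (Fin N) (Fin N) ℂ) with hV
  have hVV : star V * V = 1 := by
    simpa [hV] using Unitary.star_mul_self_of_mem hC.eigenvectorUnitary.2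
  have hVV' : V * star V = 1 := by
    simpa [hV] using Unitary.mul_star_self_of_mem hC.eigenvectorUnitary.2
  have hVdet : IsUnit V.det ∧ IsUnit (star V).det := by
    constructor
    · exact IsUnit.of_mul_eq_one _ (by rw [← Matrix.det_mul, hVV', Matrix.det_one])
    · exact IsUnit.of_mul_eq_one _ (by rw [← Matrix.det_mul, hVV, Matrix.det_one])
  set D : Matrix (Fin N) (Fin N) ℂ :=
    Matrix.diagonal (fun i => (hC.eigenvalues i : ℂ)) with hD
  have hCD : C = V * D * star V := hC.spectral_theorem
  have hDC : star V * C * V = D := (by have h' := hC.conjStarAlgAut_star_eigenvectorUnitary; rwa [Unitary.conjStarAlgAut_apply, Unitary.coe_star, star_star] at h')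
  constructor
  · -- membership
    set d : Fin N → ℂ := fun i => if ((σ.symm i : Fin N) : ℕ) < M then 1 else 0 with hd
    have hsd : star d = d := by
      funext i; by_cases h : ((σ.symm i : Fin N) : ℕ) < M <;> simp [hd, h]
    have hdd : d * d = d := by
      funext i; by_cases h : ((σ.symm i : Fin N) : ℕ) < M <;> simp [hd, h]
    refine ⟨V * Matrix.diagonal d * star V, ?_, ?_, ?_, ?_⟩
    · -- Hermitian
      simp only [Matrix.IsHermitian, Matrix.conjTranspose_mul,
        Matrix.conjTranspose_conjTranspose, Matrix.diagonal_conjTranspose, hsd,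
        Matrix.star_eq_conjTranspose, Matrix.mul_assoc]
    · -- idempotent
      have : Matrix.diagonal d * Matrix.diagonal d = Matrix.diagonal d := by
        rw [Matrix.diagonal_mul_diagonal]
        exact congrArg Matrix.diagonal (funext fun i => congrFun hdd i)
      calc (V * Matrix.diagonal d * star V) * (V * Matrix.diagonal d * star V)
          = V * Matrix.diagonal d * (star V * V) * Matrix.diagonal d * star V := by
            noncomm_ring
        _ = V * (Matrix.diagonal d * Matrix.diagonal d) * star V := by
            rw [hVV]; noncomm_ring
        _ = V * Matrix.diagonal d * star V := by rw [this]
    · -- rank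
      rw [Matrix.rank_mul_eq_left_of_isUnit_det _ _ hVdet.2,
        Matrix.rank_mul_eq_right_of_isUnit_det _ _ hVdet.1, Matrix.rank_diagonal,
        Fintype.card_subtype]
      have : Finset.univ.filter (fun i : Fin N => d i ≠ 0)
          = Finset.univ.filter (fun i : Fin N => ((σ.symm i : Fin N) : ℕ) < M) := by
        apply Finset.filter_congr
        intro i _
        by_cases h : ((σ.symm i : Fin N) : ℕ) < M <;> simp [hd, h]
      have hcard2 : (Finset.univ.filter (fun i : Fin N => ((σ.symm i : Fin N) : ℕ) < M)).card
          = (Finset.univ.filter (fun i : Fin N => (i : ℕ) < M)).card := by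
        apply Finset.card_nbij (fun i => σ.symm i)
        · intro i hi; simp at hi ⊢; exact hi
        · intro i hi j hj hij; exact σ.symm.injective hij
        · intro j hj
          refine ⟨σ j, ?_, by simp⟩
          simp at hj ⊢; exact hj
      rw [this, hcard2, cardF' hMN]
    · -- trace value
      have htr : Matrix.trace (V * Matrix.diagonal d * star V * C)
          = Matrix.trace (D * Matrix.diagonal d) := by
        rw [show V * Matrix.diagonal d * star V * C
              = (V * Matrix.diagonal d) * (star V * C) by noncomm_ring,
          Matrix.trace_mul_comm,
          show (star V * C) * (V * Matrix.diagonal d)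
              = (star V * C * V) * Matrix.diagonal d by noncomm_ring,
          hDC]
      rw [htr, hD, Matrix.diagonal_mul_diagonal, Matrix.trace_diagonal]
      have : ∀ i : Fin N, (hC.eigenvalues i : ℂ) * d i
          = ((if ((σ.symm i : Fin N) : ℕ) < M then hC.eigenvalues i else 0 : ℝ) : ℂ) := by
        intro i; by_cases h : ((σ.symm i : Fin N) : ℕ) < M <;> simp [hd, h]
      simp only [this]
      rw [← Complex.ofReal_sum, Complex.ofReal_re,
        ← Equiv.sum_comp σ (fun i => if ((σ.symm i : Fin N) : ℕ) < M then hC.eigenvalues i else 0)]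
      simp only [Equiv.symm_apply_apply]
      rw [← Finset.sum_filter]
      apply Finset.sum_congr rfl
      intro j _
      rw [hμσ]; rfl
  · -- upper bound
    rintro x ⟨R, hR, hP, hrank, rfl⟩
    set S : Matrix (Fin N) (Fin N) ℂ := star V * R * V with hS
    have hSh : S.IsHermitian := by
      simp only [hS, Matrix.IsHermitian, Matrix.conjTranspose_mul,
        Matrix.conjTranspose_conjTranspose, Matrix.star_eq_conjTranspose]
      rw [hR.eq, Matrix.mul_assoc]
    have hSS : S * S = S := by
      calc (star V * R * V) * (star V * R * V)
          = star V * R * (V * star V) * R * V := by noncomm_ring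
        _ = star V * (R * R) * V := by rw [hVV']; noncomm_ring
        _ = star V * R * V := by rw [hP]
    set t : Fin N → ℝ := fun i => (S i i).re with ht
    have hdiag_real : ∀ i, (S i i).im = 0 := by
      intro i
      have := congrFun (congrFun hSh i) i
      simp only [Matrix.conjTranspose_apply] at this
      have h2 : (starRingEnd ℂ) (S i i) = S i i := this
      have := congrArg Complex.im h2
      simp at this; linarith
    have hSii : ∀ i, S i i = ∑ j, (Complex.normSq (S i j) : ℂ) := by
      intro i
      conv_lhs => rw [← hSS]
      rw [Matrix.mul_apply]
      apply Finset.sum_congr rfl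
      intro j _
      have hji : S j i = (starRingEnd ℂ) (S i j) := by
        have := congrFun (congrFun hSh j) i
        simp only [Matrix.conjTranspose_apply] at this
        exact this.symm
      rw [hji, Complex.mul_conj]
    have h0 : ∀ i, 0 ≤ t i := by
      intro i
      have := hSii i
      have h2 := congrArg Complex.re this
      simp only [ht]
      rw [h2]
      rw [Complex.re_sum]
      apply Finset.sum_nonneg
      intro j _
      simp [Complex.normSq_nonneg]
    have h1 : ∀ i, t i ≤ 1 := by
      intro i
      have h2 := congrArg Complex.re (hSii i)
      have h3 : t i = ∑ j, Complex.normSq (S i j) := by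
        simp only [ht]; rw [h2, Complex.re_sum]; simp
      have h4 : Complex.normSq (S i i) ≤ ∑ j, Complex.normSq (S i j) :=
        Finset.single_le_sum (fun j _ => Complex.normSq_nonneg _) (Finset.mem_univ i)
      have h5 : Complex.normSq (S i i) = t i ^ 2 := by
        rw [Complex.normSq_apply, hdiag_real i]; simp [ht]; ring
      nlinarith [h0 i]
    have hsum : ∑ i, t i = M := by
      have htrS : Matrix.trace S = Matrix.trace R := by
        rw [hS, Matrix.trace_mul_cycle, hVV', Matrix.one_mul]
      have : ∑ i, t i = (Matrix.trace S).re := by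
        simp only [ht, Matrix.trace, Matrix.diag_apply, Complex.re_sum]
      rw [this, htrS, trace_eq_rank' hR hP, hrank]
    have htrRC : (Matrix.trace (R * C)).re = ∑ i, hC.eigenvalues i * t i := by
      have h2 : Matrix.trace (R * C) = Matrix.trace (S * D) := by
        rw [hCD, show R * (V * D * star V) = (R * (V * D)) * star V by noncomm_ring,
          Matrix.trace_mul_comm,
          show star V * (R * (V * D)) = S * D by rw [hS]; noncomm_ring]
      rw [h2]
      have h3 : Matrix.trace (S * D) = ∑ i, S i i * (hC.eigenvalues i : ℂ) := by
        simp only [Matrix.trace, Matrix.diag_apply, hD, Matrix.mul_diagonal]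
      rw [h3, Complex.re_sum]
      apply Finset.sum_congr rfl
      intro i _
      simp [ht, mul_comm]
    rw [htrRC]
    have hreindex : ∑ i, hC.eigenvalues i * t i = ∑ j, μ j * t (σ j) := by
      rw [← Equiv.sum_comp σ (fun i => hC.eigenvalues i * t i)]
      apply Finset.sum_congr rfl
      intro j _
      rw [hμσ]; rfl
    rw [hreindex]
    apply key' hM hMN μ (fun j => t (σ j)) hμ (fun j => h0 _) (fun j => h1 _)
    rw [Equiv.sum_comp σ t, hsum]
end

section
/- Fix matrices G_m ∈ C^{N×n}, m = 1,…,M, a positive semidefinite matrix J_P ∈ R^{n×n}, a positive semidefinite Q^{1/2} ∈ R^{n×n}, and an integer 1 ≤ K ≤ N. Then the function f(Λ) = 2 Re tr(Λ Q^{1/2}) − tr(Λᵀ J_P Λ) − 2 Σ_{i=1}^{K} μ_i( Σ_{m=1}^{M} G_m Λ Λᵀ G_mᴴ ) defined on complex n×n matrices Λ is concave. -/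
open Matrix
open scoped ComplexOrder

/-- Sum of the `K` largest eigenvalues of a Hermitian matrix (`0` if not Hermitian):
`Tuple.sort` arranges the eigenvalues increasingly, and we sum the last `K` of them. -/
noncomputable def topEigSum {N : ℕ} (K : ℕ) (A : Matrix (Fin N) (Fin N) ℂ) : ℝ :=
  if hA : A.IsHermitian then
    ∑ i : Fin N, if N ≤ (i : ℕ) + K then
      hA.eigenvalues (Tuple.sort hA.eigenvalues i) else 0
  else 0

/-! ### Auxiliary lemmas -/

section Aux

/-- Convexity step for a nonnegative symmetric bilinear form. -/
lemma aux_qstep {E : Type*} [AddCommGroup E] [Module ℝ E] (B : E → E → ℝ)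
    (hadd : ∀ x y z, B (x + y) z = B x z + B y z)
    (hsmul : ∀ (r : ℝ) x y, B (r • x) y = r * B x y)
    (hsymm : ∀ x y, B x y = B y x)
    (hpos : ∀ x, 0 ≤ B x x)
    (x y : E) {a b : ℝ} (ha : 0 ≤ a) (hb : 0 ≤ b) (hab : a + b = 1) :
    B (a • x + b • y) (a • x + b • y) ≤ a * B x x + b * B y y := by
  have haddr : ∀ x y z, B z (x + y) = B z x + B z y := by
    intro x y z; rw [hsymm, hadd, hsymm x z, hsymm y z]
  have hsmulr : ∀ (r : ℝ) x y, B y (r • x) = r * B y x := by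
    intro r x y; rw [hsymm, hsmul, hsymm]
  have hexp : B (x - y) (x - y) = B x x - 2 * B x y + B y y := by
    have h : x - y = x + (-1 : ℝ) • y := by simp [sub_eq_add_neg]
    rw [h]
    simp only [hadd, haddr, hsmul, hsmulr]
    rw [hsymm y x]; ring
  have key : 0 ≤ B x x - 2 * B x y + B y y := hexp ▸ hpos (x - y)
  have hexp2 : B (a • x + b • y) (a • x + b • y)
      = a * a * B x x + 2 * (a * b) * B x y + b * b * B y y := by
    simp only [hadd, haddr, hsmul, hsmulr]
    rw [hsymm y x]; ring
  rw [hexp2]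
  have hb2 : b = 1 - a := by linarith
  subst hb2
  nlinarith [mul_nonneg (mul_nonneg ha hb) key]

lemma aux_psd_diag_re_nonneg {N : ℕ} {M : Matrix (Fin N) (Fin N) ℂ} (h : M.PosSemidef)
    (j : Fin N) : 0 ≤ (M j j).re := by
  have := h.re_dotProduct_nonneg (Pi.single j 1)
  simpa [dotProduct, Matrix.mulVec, Pi.single_apply, Finset.sum_ite_eq] using this

lemma aux_psd_trace_re_nonneg {N : ℕ} {M : Matrix (Fin N) (Fin N) ℂ} (h : M.PosSemidef) :
    0 ≤ (Matrix.trace M).re := by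
  rw [Matrix.trace, Complex.re_sum]
  exact Finset.sum_nonneg fun j _ => aux_psd_diag_re_nonneg h j

lemma aux_lp_bound {N K : ℕ} (hK : 1 ≤ K) (hKN : K ≤ N) (μ d : Fin N → ℝ)
    (hmono : Monotone μ) (hd0 : ∀ i, 0 ≤ d i) (hd1 : ∀ i, d i ≤ 1)
    (hsum : ∑ i, d i = K) :
    ∑ i, μ i * d i ≤ ∑ i : Fin N, if N ≤ (i : ℕ) + K then μ i else 0 := by
  have hN : 0 < N := lt_of_lt_of_le hK hKN
  set t : ℝ := μ ⟨N - K, by omega⟩ with ht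
  have hcard : ∑ i : Fin N, (if N ≤ (i : ℕ) + K then (1 : ℝ) else 0) = K := by
    rw [Fin.sum_univ_eq_sum_range (fun i => if N ≤ i + K then (1 : ℝ) else 0) N]
    rw [Finset.sum_boole]
    have : (Finset.range N).filter (fun i => N ≤ i + K) = Finset.Ico (N - K) N := by
      ext i; simp [Finset.mem_filter, Finset.mem_range, Finset.mem_Ico]; omega
    rw [this, Nat.card_Ico]
    congr 1; omega
  have key : ∀ i : Fin N, μ i * d i - (if N ≤ (i : ℕ) + K then μ i else 0)
      ≤ t * (d i - (if N ≤ (i : ℕ) + K then (1 : ℝ) else 0)) := by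
    intro i
    by_cases h : N ≤ (i : ℕ) + K
    · simp only [h, if_true]
      have hti : t ≤ μ i := hmono (by rw [Fin.le_def]; simp; omega)
      nlinarith [hd1 i, hd0 i]
    · simp only [h, if_false]
      have hti : μ i ≤ t := hmono (by rw [Fin.le_def]; simp; omega)
      nlinarith [hd0 i]
  have hsle := Finset.sum_le_sum (fun i (_ : i ∈ Finset.univ) => key i)
  rw [Finset.sum_sub_distrib] at hsle
  have hrhs : ∑ i : Fin N, t * (d i - (if N ≤ (i : ℕ) + K then (1 : ℝ) else 0)) = 0 := by
    rw [← Finset.mul_sum, Finset.sum_sub_distrib, hsum, hcard]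
    ring
  rw [hrhs] at hsle
  linarith

/-- **Ky Fan bound**: for any matrix `U` with orthonormal columns,
`Re tr(Uᴴ A U)` is at most the sum of the `K` largest eigenvalues of `A`. -/
lemma aux_trace_re_le_topEigSum {N K : ℕ} (hK : 1 ≤ K) (hKN : K ≤ N)
    {A : Matrix (Fin N) (Fin N) ℂ} (hA : A.IsHermitian)
    (U : Matrix (Fin N) (Fin K) ℂ) (hU : Uᴴ * U = 1) :
    (Matrix.trace (Uᴴ * A * U)).re ≤ topEigSum K A := by
  set V : Matrix (Fin N) (Fin N) ℂ := (hA.eigenvectorUnitary : Matrix (Fin N) (Fin N) ℂ) with hV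
  have hVsV : star V * V = 1 := Matrix.mem_unitaryGroup_iff'.mp hA.eigenvectorUnitary.2
  have hVVs : V * star V = 1 := Matrix.mem_unitaryGroup_iff.mp hA.eigenvectorUnitary.2
  set W : Matrix (Fin N) (Fin K) ℂ := star V * U with hWdef
  have hWs : Wᴴ = Uᴴ * V := by
    rw [hWdef, Matrix.star_eq_conjTranspose, Matrix.conjTranspose_mul,
      Matrix.conjTranspose_conjTranspose]
  have hW : Wᴴ * W = 1 := by
    rw [hWs, hWdef, Matrix.star_eq_conjTranspose, ← Matrix.mul_assoc, Matrix.mul_assoc (Uᴴ) V Vᴴ,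
      ← Matrix.star_eq_conjTranspose V, hVVs, Matrix.mul_one, hU]
  set lam : Fin N → ℝ := hA.eigenvalues with hlam
  set D : Matrix (Fin N) (Fin N) ℂ := Matrix.diagonal (RCLike.ofReal ∘ lam) with hD
  have htr : Uᴴ * A * U = Wᴴ * D * W := by
    rw [hA.spectral_theorem, Unitary.conjStarAlgAut_apply]
    rw [hWs, hWdef]
    simp only [← hV, ← hD, Matrix.mul_assoc]
    rfl
  set c : Fin N → ℝ := fun j => ∑ k, Complex.normSq (W j k) with hc
  have htrace : (Matrix.trace (Uᴴ * A * U)).re = ∑ j, lam j * c j := by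
    rw [htr, Matrix.trace]
    rw [Complex.re_sum]
    have hdiag : ∀ k, ((Wᴴ * D * W) k k).re = ∑ j, lam j * Complex.normSq (W j k) := by
      intro k
      rw [Matrix.mul_apply]
      rw [Complex.re_sum]
      congr 1; ext j
      rw [Matrix.mul_apply]
      rw [hD]
      simp only [Matrix.diagonal_apply, Function.comp_apply]
      simp only [mul_ite, mul_zero]
      simp only [Finset.sum_ite_eq', Finset.mem_univ, if_true]
      rw [show (RCLike.ofReal (lam j) : ℂ) = ((lam j : ℝ) : ℂ) from rfl]
      rw [Matrix.conjTranspose_apply]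
      have : star (W j k) * (lam j : ℂ) * W j k
          = (lam j : ℂ) * ((Complex.normSq (W j k) : ℝ) : ℂ) := by
        rw [mul_comm (star (W j k)) _, mul_assoc]
        congr 1
        rw [Complex.star_def, ← Complex.normSq_eq_conj_mul_self]
      rw [this]
      simp
    simp only [Matrix.diag_apply]
    rw [Finset.sum_congr rfl (fun k _ => hdiag k)]
    rw [Finset.sum_comm]
    congr 1; ext j
    rw [hc, Finset.mul_sum]
  have hcsum : ∑ j, c j = K := by
    have : ∀ k : Fin K, ((Wᴴ * W) k k).re = ∑ j, Complex.normSq (W j k) := by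
      intro k
      rw [Matrix.mul_apply, Complex.re_sum]
      congr 1; ext j
      rw [Matrix.conjTranspose_apply, Complex.star_def, ← Complex.normSq_eq_conj_mul_self]
      simp
    have h2 : ∑ k : Fin K, ((Wᴴ * W) k k).re = ∑ k : Fin K, ∑ j, Complex.normSq (W j k) :=
      Finset.sum_congr rfl (fun k _ => this k)
    rw [hW] at h2
    simp only [Matrix.one_apply_eq, Complex.one_re] at h2
    rw [Finset.sum_const, Finset.card_univ, Fintype.card_fin, nsmul_eq_mul, mul_one] at h2
    rw [Finset.sum_comm] at h2
    simp only [hc]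
    exact h2.symm
  have hc1 : ∀ j, c j ≤ 1 := by
    intro j
    set P : Matrix (Fin N) (Fin N) ℂ := W * Wᴴ with hP
    have hPj : (P j j).re = c j := by
      rw [hP, Matrix.mul_apply, Complex.re_sum, hc]
      congr 1; ext k
      rw [mul_comm, Matrix.conjTranspose_apply, Complex.star_def,
        ← Complex.normSq_eq_conj_mul_self]
      simp
    have hidem : P * P = P := by
      rw [hP, Matrix.mul_assoc, ← Matrix.mul_assoc Wᴴ W Wᴴ, hW, Matrix.one_mul]
    have hherm : Pᴴ = P := by
      rw [hP, Matrix.conjTranspose_mul, Matrix.conjTranspose_conjTranspose]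
    have hpsd : (1 - P).PosSemidef := by
      have h1 : ((1 - P)ᴴ * (1 - P)) = 1 - P := by
        rw [Matrix.conjTranspose_sub, Matrix.conjTranspose_one, hherm]
        rw [Matrix.sub_mul, Matrix.mul_sub, Matrix.mul_sub, hidem]
        simp
      have := Matrix.posSemidef_conjTranspose_mul_self (1 - P)
      rwa [h1] at this
    have := aux_psd_diag_re_nonneg hpsd j
    simp only [Matrix.sub_apply, Matrix.one_apply_eq, Complex.sub_re, Complex.one_re] at this
    rw [hPj] at this
    linarith
  have hc0 : ∀ j, 0 ≤ c j := fun j => Finset.sum_nonneg fun k _ => Complex.normSq_nonneg _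
  set σ : Equiv.Perm (Fin N) := Tuple.sort lam with hσ
  have hmono : Monotone (fun i => lam (σ i)) := Tuple.monotone_sort lam
  have hre : ∑ j, lam j * c j = ∑ i, lam (σ i) * c (σ i) :=
    (Equiv.sum_comp σ (fun j => lam j * c j)).symm
  have hdsum : ∑ i, c (σ i) = K := by
    rw [Equiv.sum_comp σ c]; exact hcsum
  have hlp := aux_lp_bound hK hKN (fun i => lam (σ i)) (fun i => c (σ i)) hmono
    (fun i => hc0 _) (fun i => hc1 _) hdsum
  rw [topEigSum, dif_pos hA]
  rw [htrace, hre]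
  exact hlp

/-- The Ky Fan bound is attained by the eigenvectors of the top `K` eigenvalues. -/
lemma aux_exists_achieving {N K : ℕ} (hK : 1 ≤ K) (hKN : K ≤ N)
    {A : Matrix (Fin N) (Fin N) ℂ} (hA : A.IsHermitian) :
    ∃ U : Matrix (Fin N) (Fin K) ℂ, Uᴴ * U = 1 ∧
      (Matrix.trace (Uᴴ * A * U)).re = topEigSum K A := by
  set V : Matrix (Fin N) (Fin N) ℂ := (hA.eigenvectorUnitary : Matrix (Fin N) (Fin N) ℂ) with hV
  have hVsV : star V * V = 1 := Matrix.mem_unitaryGroup_iff'.mp hA.eigenvectorUnitary.2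
  set lam : Fin N → ℝ := hA.eigenvalues with hlam
  set σ : Equiv.Perm (Fin N) := Tuple.sort lam with hσ
  set e : Fin K → Fin N := fun k => σ ⟨N - K + (k : ℕ), by omega⟩ with he
  have he_inj : Function.Injective e := by
    intro k k' h
    rw [he] at h
    simp only at h
    have := σ.injective h
    have := Fin.mk.injEq .. ▸ this
    apply Fin.ext
    omega
  refine ⟨V.submatrix id e, ?_, ?_⟩
  · have h1 : (V.submatrix id e)ᴴ = Vᴴ.submatrix e id := Matrix.conjTranspose_submatrix V id e
    rw [h1, ← Matrix.submatrix_mul Vᴴ V e id e Function.bijective_id]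
    rw [← Matrix.star_eq_conjTranspose, hVsV]
    ext i j
    simp only [Matrix.submatrix_apply, Matrix.one_apply, he_inj.eq_iff]
  · have h1 : (V.submatrix id e)ᴴ = Vᴴ.submatrix e id := Matrix.conjTranspose_submatrix V id e
    have h2 : (V.submatrix id e)ᴴ * A * V.submatrix id e
        = (Vᴴ * A * V).submatrix e e := by
      rw [h1]
      rw [Matrix.submatrix_mul (Vᴴ * A) V e id e Function.bijective_id,
        Matrix.submatrix_mul Vᴴ A e id id Function.bijective_id]
      simp [Matrix.submatrix_id_id]
    rw [h2]
    have h3 : Vᴴ * A * V = Matrix.diagonal (RCLike.ofReal ∘ lam) := by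
      rw [← Matrix.star_eq_conjTranspose]
      have := hA.conjStarAlgAut_star_eigenvectorUnitary
      simpa [hV, Unitary.conjStarAlgAut_apply, Unitary.coe_star] using this
    rw [h3]
    rw [Matrix.trace]
    rw [Complex.re_sum]
    simp only [Matrix.diag_apply, Matrix.submatrix_apply, Matrix.diagonal_apply_eq,
      Function.comp_apply]
    have hre : ∀ k : Fin K, (RCLike.ofReal (lam (e k)) : ℂ).re = lam (e k) := fun k => rfl
    rw [Finset.sum_congr rfl fun k _ => hre k]
    rw [topEigSum, dif_pos hA]
    rw [← Finset.sum_filter]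
    refine (Finset.sum_nbij' (fun i : Fin N => (⟨(i : ℕ) - (N - K), by omega⟩ : Fin K))
      (fun k : Fin K => (⟨N - K + (k : ℕ), by omega⟩ : Fin N)) ?_ ?_ ?_ ?_ ?_).symm
    · intro a ha; exact Finset.mem_univ _
    · intro k hk
      simp only [Finset.mem_filter, Finset.mem_univ, true_and]
      omega
    · intro a ha
      simp only [Finset.mem_filter, Finset.mem_univ, true_and] at ha
      apply Fin.ext; simp; try omega
    · intro k hk
      apply Fin.ext; simp; try omega
    · intro a ha
      simp only [Finset.mem_filter, Finset.mem_univ, true_and] at ha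
      congr 1
      rw [he]
      congr 1
      apply Fin.ext
      simp
      omega

lemma aux_sum_psd {N n M : ℕ} (G : Fin M → Matrix (Fin N) (Fin n) ℂ)
    (Λ : Matrix (Fin n) (Fin n) ℂ) :
    (∑ m, G m * Λ * Λᴴ * (G m)ᴴ).PosSemidef := by
  have key : ∀ m : Fin M, (G m * Λ * Λᴴ * (G m)ᴴ).PosSemidef := by
    intro m
    have h : G m * Λ * Λᴴ * (G m)ᴴ = (G m * Λ) * (G m * Λ)ᴴ := by
      rw [Matrix.conjTranspose_mul, ← Matrix.mul_assoc]
    rw [h]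
    exact Matrix.posSemidef_self_mul_conjTranspose _
  induction (Finset.univ : Finset (Fin M)) using Finset.induction with
  | empty => simpa using Matrix.PosSemidef.zero
  | insert _ _ hx ih =>
    rw [Finset.sum_insert hx]
    exact (key _).add ih

end Aux

/-- Concavity of the dual objective
`f(Λ) = 2 Re tr(Λ Q^{1/2}) − Re tr(Λᴴ J_P Λ) − 2 Σ_{i≤K} μ_i(Σ_m G_m Λ Λᴴ G_mᴴ)`. -/
theorem stmt_8 {N n M K : ℕ} (hK : 1 ≤ K) (hKN : K ≤ N)
    (G : Fin M → Matrix (Fin N) (Fin n) ℂ)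
    (JP Qh : Matrix (Fin n) (Fin n) ℝ)
    (hJP : JP.PosSemidef) (hQh : Qh.PosSemidef) :
    ConcaveOn ℝ Set.univ (fun Λ : Matrix (Fin n) (Fin n) ℂ =>
      2 * (Matrix.trace (Λ * Qh.map Complex.ofReal)).re
        - (Matrix.trace (Λᴴ * JP.map Complex.ofReal * Λ)).re
        - 2 * topEigSum K (∑ m, G m * Λ * Λᴴ * (G m)ᴴ)) := by
  classical
  set Jc : Matrix (Fin n) (Fin n) ℂ := JP.map Complex.ofReal with hJc
  -- Jc is positive semidefinite
  obtain ⟨Bm, hBm⟩ : ∃ Bm : Matrix (Fin n) (Fin n) ℝ, JP = Bmᵀ * Bm := by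
    open scoped MatrixOrder in
    obtain ⟨B, hB⟩ := CStarAlgebra.nonneg_iff_eq_star_mul_self.mp hJP.nonneg
    exact ⟨B, by rw [hB, star_eq_conjTranspose, conjTranspose_eq_transpose_of_trivial]⟩
  have hJcpsd : Jc.PosSemidef := by
    have hmap : Jc = (Bm.map Complex.ofReal)ᴴ * Bm.map Complex.ofReal := by
      rw [hJc, hBm]
      ext i j
      simp only [Matrix.map_apply, Matrix.mul_apply, Matrix.conjTranspose_apply,
        Complex.star_def, Complex.conj_ofReal, star_trivial]
      push_cast
      rfl
    rw [hmap]
    exact Matrix.posSemidef_conjTranspose_mul_self _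
  -- the quadratic form of Jc
  set B1 : Matrix (Fin n) (Fin n) ℂ → Matrix (Fin n) (Fin n) ℂ → ℝ :=
    fun X Y => (Matrix.trace (Xᴴ * Jc * Y)).re with hB1
  have hB1add : ∀ X Y Z, B1 (X + Y) Z = B1 X Z + B1 Y Z := by
    intro X Y Z
    simp only [hB1, Matrix.conjTranspose_add, Matrix.add_mul, Matrix.trace_add, Complex.add_re]
  have hB1smul : ∀ (r : ℝ) X Y, B1 (r • X) Y = r * B1 X Y := by
    intro r X Y
    simp only [hB1, Matrix.conjTranspose_smul, star_trivial, Matrix.smul_mul,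
      Matrix.trace_smul, Complex.real_smul, Complex.re_ofReal_mul]
  have hB1symm : ∀ X Y, B1 X Y = B1 Y X := by
    intro X Y
    have h : Yᴴ * Jc * X = (Xᴴ * Jc * Y)ᴴ := by
      rw [Matrix.conjTranspose_mul, Matrix.conjTranspose_mul,
        Matrix.conjTranspose_conjTranspose, hJcpsd.isHermitian.eq, Matrix.mul_assoc]
    simp only [hB1]
    rw [h, Matrix.trace_conjTranspose]
    simp [Complex.star_def]
  have hB1pos : ∀ X, 0 ≤ B1 X X := by
    intro X
    exact aux_psd_trace_re_nonneg (hJcpsd.conjTranspose_mul_mul_same X)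
  -- concavity inequality
  refine ⟨convex_univ, ?_⟩
  intro X _ Y _ a b ha hb hab
  simp only [smul_eq_mul]
  -- linear part
  have hlin : (Matrix.trace ((a • X + b • Y) * Qh.map Complex.ofReal)).re
      = a * (Matrix.trace (X * Qh.map Complex.ofReal)).re
        + b * (Matrix.trace (Y * Qh.map Complex.ofReal)).re := by
    rw [Matrix.add_mul, Matrix.smul_mul, Matrix.smul_mul, Matrix.trace_add,
      Matrix.trace_smul, Matrix.trace_smul]
    simp [Complex.real_smul, Complex.re_ofReal_mul]
  -- quadratic part
  have hquad : (Matrix.trace ((a • X + b • Y)ᴴ * Jc * (a • X + b • Y))).re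
      ≤ a * (Matrix.trace (Xᴴ * Jc * X)).re + b * (Matrix.trace (Yᴴ * Jc * Y)).re :=
    aux_qstep B1 hB1add hB1smul hB1symm hB1pos X Y ha hb hab
  -- eigenvalue part
  have heig : topEigSum K (∑ m, G m * (a • X + b • Y) * (a • X + b • Y)ᴴ * (G m)ᴴ)
      ≤ a * topEigSum K (∑ m, G m * X * Xᴴ * (G m)ᴴ)
        + b * topEigSum K (∑ m, G m * Y * Yᴴ * (G m)ᴴ) := by
    have hA0 := aux_sum_psd G (a • X + b • Y)
    obtain ⟨U, hU, hUeq⟩ := aux_exists_achieving hK hKN hA0.isHermitian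
    set B2 : Matrix (Fin n) (Fin n) ℂ → Matrix (Fin n) (Fin n) ℂ → ℝ :=
      fun P Q => (Matrix.trace (Uᴴ * (∑ m, G m * P * Qᴴ * (G m)ᴴ) * U)).re with hB2
    have hB2add : ∀ P P' Q, B2 (P + P') Q = B2 P Q + B2 P' Q := by
      intro P P' Q
      simp only [hB2]
      rw [show (∑ m, G m * (P + P') * Qᴴ * (G m)ᴴ)
          = (∑ m, G m * P * Qᴴ * (G m)ᴴ) + (∑ m, G m * P' * Qᴴ * (G m)ᴴ) by
        rw [← Finset.sum_add_distrib]
        congr 1; ext m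
        rw [Matrix.mul_add, Matrix.add_mul, Matrix.add_mul]]
      rw [Matrix.mul_add, Matrix.add_mul, Matrix.trace_add, Complex.add_re]
    have hB2smul : ∀ (r : ℝ) P Q, B2 (r • P) Q = r * B2 P Q := by
      intro r P Q
      simp only [hB2]
      rw [show (∑ m, G m * (r • P) * Qᴴ * (G m)ᴴ) = r • ∑ m, G m * P * Qᴴ * (G m)ᴴ by
        rw [Finset.smul_sum]
        congr 1; ext m
        rw [Matrix.mul_smul, Matrix.smul_mul, Matrix.smul_mul]]
      rw [Matrix.mul_smul, Matrix.smul_mul, Matrix.trace_smul]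
      simp [Complex.real_smul, Complex.re_ofReal_mul]
    have hB2symm : ∀ P Q, B2 P Q = B2 Q P := by
      intro P Q
      simp only [hB2]
      have hsum : (∑ m, G m * Q * Pᴴ * (G m)ᴴ) = (∑ m, G m * P * Qᴴ * (G m)ᴴ)ᴴ := by
        rw [Matrix.conjTranspose_sum]
        refine Finset.sum_congr rfl fun m _ => ?_
        simp only [Matrix.conjTranspose_mul, Matrix.conjTranspose_conjTranspose,
          Matrix.mul_assoc]
      have h : Uᴴ * (∑ m, G m * Q * Pᴴ * (G m)ᴴ) * U
          = (Uᴴ * (∑ m, G m * P * Qᴴ * (G m)ᴴ) * U)ᴴ := by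
        rw [hsum]
        simp only [Matrix.conjTranspose_mul, Matrix.conjTranspose_conjTranspose,
          Matrix.mul_assoc]
      rw [h, Matrix.trace_conjTranspose]
      simp [Complex.star_def]
    have hB2pos : ∀ P, 0 ≤ B2 P P := by
      intro P
      exact aux_psd_trace_re_nonneg ((aux_sum_psd G P).conjTranspose_mul_mul_same U)
    have hstep := aux_qstep B2 hB2add hB2smul hB2symm hB2pos X Y ha hb hab
    have hXle : (Matrix.trace (Uᴴ * (∑ m, G m * X * Xᴴ * (G m)ᴴ) * U)).re
        ≤ topEigSum K (∑ m, G m * X * Xᴴ * (G m)ᴴ) :=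
      aux_trace_re_le_topEigSum hK hKN (aux_sum_psd G X).isHermitian U hU
    have hYle : (Matrix.trace (Uᴴ * (∑ m, G m * Y * Yᴴ * (G m)ᴴ) * U)).re
        ≤ topEigSum K (∑ m, G m * Y * Yᴴ * (G m)ᴴ) :=
      aux_trace_re_le_topEigSum hK hKN (aux_sum_psd G Y).isHermitian U hU
    calc topEigSum K (∑ m, G m * (a • X + b • Y) * (a • X + b • Y)ᴴ * (G m)ᴴ)
        = B2 (a • X + b • Y) (a • X + b • Y) := hUeq.symm
      _ ≤ a * B2 X X + b * B2 Y Y := hstep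
      _ ≤ a * topEigSum K (∑ m, G m * X * Xᴴ * (G m)ᴴ)
            + b * topEigSum K (∑ m, G m * Y * Yᴴ * (G m)ᴴ) := by
          apply add_le_add
          · exact mul_le_mul_of_nonneg_left hXle ha
          · exact mul_le_mul_of_nonneg_left hYle hb
  rw [hlin]
  linarith
end

section
/- Let C ∈ C^{N×N} be Hermitian with μ_M(C) > μ_{M+1}(C) for some 1 ≤ M < N. Then the maximizer of tr(R C) over Hermitian R with 0 ⪯ R ⪯ I and tr(R) = M is unique and equals the orthogonal projection onto the span of eigenvectors corresponding to the M largest eigenvalues of C. -/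
open Matrix
open scoped ComplexOrder

private lemma psd_diag {n : Type*} [Fintype n] [DecidableEq n]
    {X : Matrix n n ℂ} (hX : X.PosSemidef) (j : n) : 0 ≤ X j j := by
  exact hX.diag_nonneg

open scoped MatrixOrder in
private lemma psd_entry_zero {n : Type*} [Fintype n] [DecidableEq n]
    {X : Matrix n n ℂ} (hX : X.PosSemidef) {j : n} (h : X j j = 0) (i : n) : X i j = 0 := by
  obtain ⟨B, rfl⟩ := CStarAlgebra.nonneg_iff_eq_star_mul_self.mp hX.nonneg
  have hjj : ∑ k, Complex.normSq (B k j) = 0 := by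
    have h' := congrArg Complex.re h
    simpa [Matrix.mul_apply, Matrix.star_apply, ← Complex.normSq_eq_conj_mul_self,
      Complex.re_sum] using h'
  have hcol : ∀ k, B k j = 0 := by
    intro k
    have := (Finset.sum_eq_zero_iff_of_nonneg
      (fun k _ => Complex.normSq_nonneg (B k j))).mp hjj k (Finset.mem_univ k)
    exact Complex.normSq_eq_zero.mp this
  simp [Matrix.mul_apply, Matrix.star_apply, hcol]

private lemma card_lt_filter {N M : ℕ} (h : M ≤ N) :
    (Finset.univ.filter (fun i : Fin N => (i : ℕ) < M)).card = M := by
  have : (Finset.univ.filter (fun i : Fin N => (i : ℕ) < M))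
      = Finset.map (Fin.castLEEmb h) Finset.univ := by
    ext j
    simp only [Finset.mem_filter, Finset.mem_univ, true_and, Finset.mem_map, Fin.castLEEmb_apply]
    constructor
    · intro hj; exact ⟨⟨(j : ℕ), hj⟩, by simp⟩
    · rintro ⟨a, rfl⟩; simpa using a.isLt
  rw [this, Finset.card_map, Finset.card_univ, Fintype.card_fin]

private lemma key_real {N M : ℕ} (hM : 1 ≤ M) (hMN : M < N)
    (μ : Fin N → ℝ) (hμ : Antitone μ)
    (hgap : μ ⟨M, hMN⟩ < μ ⟨M - 1, lt_trans (Nat.sub_lt hM Nat.one_pos) hMN⟩)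
    (t : Fin N → ℝ) (ht0 : ∀ i, 0 ≤ t i) (ht1 : ∀ i, t i ≤ 1)
    (hsum : ∑ i, t i = M) :
    (∑ i, t i * μ i ≤ ∑ i ∈ Finset.univ.filter (fun i : Fin N => (i : ℕ) < M), μ i) ∧
    (∑ i, t i * μ i = (∑ i ∈ Finset.univ.filter (fun i : Fin N => (i : ℕ) < M), μ i) →
      ∀ i : Fin N, t i = if (i : ℕ) < M then 1 else 0) := by
  classical
  set A := Finset.univ.filter (fun i : Fin N => (i : ℕ) < M) with hA
  set B := Finset.univ.filter (fun i : Fin N => ¬ (i : ℕ) < M) with hB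
  set a := μ ⟨M - 1, lt_trans (Nat.sub_lt hM Nat.one_pos) hMN⟩ with ha
  set b := μ ⟨M, hMN⟩ with hb
  have hcard : A.card = M := card_lt_filter hMN.le
  have hmuA : ∀ i ∈ A, a ≤ μ i := by
    intro i hi
    simp only [hA, Finset.mem_filter] at hi
    exact hμ (by simp [Fin.le_def]; omega)
  have hmuB : ∀ i ∈ B, μ i ≤ b := by
    intro i hi
    simp only [hB, Finset.mem_filter] at hi
    exact hμ (by simp [Fin.le_def]; omega)
  have h1 : ∑ i ∈ A, t i + ∑ i ∈ B, t i = (M : ℝ) := by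
    rw [hA, hB, Finset.sum_filter_add_sum_filter_not]; exact hsum
  have h2 : ∑ i ∈ A, (t i * μ i) + ∑ i ∈ B, (t i * μ i) = ∑ i, t i * μ i := by
    rw [hA, hB, Finset.sum_filter_add_sum_filter_not]
  have h3 : ∑ i ∈ A, t i ≤ (M : ℝ) := by
    calc ∑ i ∈ A, t i ≤ ∑ i ∈ A, (1 : ℝ) := Finset.sum_le_sum (fun i _ => ht1 i)
    _ = M := by rw [Finset.sum_const, hcard]; simp
  have hA4 : ∑ i ∈ A, (t i * μ i) ≤ ∑ i ∈ A, μ i + (∑ i ∈ A, t i - M) * a := by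
    have hstep : ∑ i ∈ A, (t i * μ i) ≤ ∑ i ∈ A, (μ i + (t i - 1) * a) := by
      refine Finset.sum_le_sum (fun i hi => ?_)
      have h5 := hmuA i hi
      have h6 := ht1 i
      nlinarith
    calc ∑ i ∈ A, (t i * μ i) ≤ ∑ i ∈ A, (μ i + (t i - 1) * a) := hstep
    _ = ∑ i ∈ A, μ i + (∑ i ∈ A, t i - M) * a := by
        rw [Finset.sum_add_distrib, ← Finset.sum_mul, Finset.sum_sub_distrib,
          Finset.sum_const, hcard]
        simp
  have hB5 : ∑ i ∈ B, (t i * μ i) ≤ (M - ∑ i ∈ A, t i) * b := by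
    have hstep : ∑ i ∈ B, (t i * μ i) ≤ ∑ i ∈ B, (t i * b) := by
      refine Finset.sum_le_sum (fun i hi => ?_)
      have h5 := hmuB i hi
      have h6 := ht0 i
      nlinarith
    calc ∑ i ∈ B, (t i * μ i) ≤ ∑ i ∈ B, (t i * b) := hstep
    _ = (M - ∑ i ∈ A, t i) * b := by rw [← Finset.sum_mul]; congr 1; linarith
  have hab : b < a := hgap
  constructor
  · nlinarith [h2, hA4, hB5, h3]
  · intro heq
    have hTA : ∑ i ∈ A, t i = M := by nlinarith [h2, hA4, hB5, h3]
    have hTB : ∑ i ∈ B, t i = 0 := by linarith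
    have hAone : ∀ i ∈ A, t i = 1 := by
      intro i hi
      have hz : ∑ i ∈ A, (1 - t i) = 0 := by
        rw [Finset.sum_sub_distrib, Finset.sum_const, hcard]; simp [hTA]
      have := (Finset.sum_eq_zero_iff_of_nonneg
        (fun i _ => by linarith [ht1 i])).mp hz i hi
      linarith
    have hBzero : ∀ i ∈ B, t i = 0 :=
      fun i hi => (Finset.sum_eq_zero_iff_of_nonneg (fun i _ => ht0 i)).mp hTB i hi
    intro i
    by_cases hi : (i : ℕ) < M
    · simp only [hi, if_true]; exact hAone i (by simp [hA, hi])
    · simp only [hi, if_false]; exact hBzero i (by simp [hB]; omega)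

/-- If the Hermitian matrix `C` has a strict gap `μ_M > μ_{M+1}`, then the maximizer of
`tr(R C)` over Hermitian `R` with `0 ⪯ R ⪯ I` and `tr R = M` is unique and equals the
orthogonal projection onto the span of eigenvectors of the `M` largest eigenvalues. -/
theorem stmt_12 {N M : ℕ} (hM : 1 ≤ M) (hMN : M < N)
    (C : Matrix (Fin N) (Fin N) ℂ) (hC : C.IsHermitian)
    (μ : Fin N → ℝ) (hμ : Antitone μ)
    (σ : Equiv.Perm (Fin N)) (hμσ : μ = hC.eigenvalues ∘ σ)
    (hgap : μ ⟨M, hMN⟩ < μ ⟨M - 1, lt_trans (Nat.sub_lt hM Nat.one_pos) hMN⟩) :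
    ∀ Rstar : Matrix (Fin N) (Fin N) ℂ,
      Rstar = ∑ i ∈ Finset.univ.filter (fun i : Fin N => (i : ℕ) < M),
        Matrix.vecMulVec (⇑(hC.eigenvectorBasis (σ i)))
          (star (⇑(hC.eigenvectorBasis (σ i)))) →
      Rstar.PosSemidef ∧
      ((1 : Matrix (Fin N) (Fin N) ℂ) - Rstar).PosSemidef ∧
      Matrix.trace Rstar = (M : ℂ) ∧
      (∀ R : Matrix (Fin N) (Fin N) ℂ,
        R.PosSemidef → ((1 : Matrix (Fin N) (Fin N) ℂ) - R).PosSemidef →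
        Matrix.trace R = (M : ℂ) →
        (Matrix.trace (R * C)).re ≤ (Matrix.trace (Rstar * C)).re) ∧
      (∀ R : Matrix (Fin N) (Fin N) ℂ,
        R.PosSemidef → ((1 : Matrix (Fin N) (Fin N) ℂ) - R).PosSemidef →
        Matrix.trace R = (M : ℂ) →
        (Matrix.trace (R * C)).re = (Matrix.trace (Rstar * C)).re →
        R = Rstar) := by
  classical
  intro Rstar hRstar
  set U : Matrix (Fin N) (Fin N) ℂ := (hC.eigenvectorUnitary : Matrix (Fin N) (Fin N) ℂ)
    with hUdef
  have hU2 : U * star U = 1 := Matrix.mem_unitaryGroup_iff.mp (hC.eigenvectorUnitary).2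
  have hU1 : star U * U = 1 := Matrix.mem_unitaryGroup_iff'.mp (hC.eigenvectorUnitary).2
  set D : Matrix (Fin N) (Fin N) ℂ :=
    Matrix.diagonal (fun j => (hC.eigenvalues j : ℂ)) with hDdef
  have hspec : C = U * D * star U := hC.spectral_theorem
  set p : Fin N → ℂ := fun j => if ((σ.symm j : Fin N) : ℕ) < M then 1 else 0 with hpdef
  set P : Matrix (Fin N) (Fin N) ℂ := Matrix.diagonal p with hPdef
  -- Rstar = U P U*
  have hRP : Rstar = U * P * star U := by
    rw [hRstar]
    ext a b
    rw [Matrix.sum_apply]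
    have hr : (U * P * star U) a b = ∑ j, U a j * (p j * star (U b j)) := by
      rw [Matrix.mul_assoc]
      simp only [Matrix.mul_apply, Matrix.star_apply, hPdef, Matrix.diagonal_apply,
        ite_mul, mul_ite, mul_zero, zero_mul, Finset.sum_ite_eq, Finset.mem_univ, if_true]
    rw [hr]
    have hrw : ∀ j, U a j * (p j * star (U b j)) =
        if ((σ.symm j : Fin N) : ℕ) < M then U a j * star (U b j) else 0 := by
      intro j
      by_cases hj : ((σ.symm j : Fin N) : ℕ) < M <;> simp [hpdef, hj]
    simp_rw [hrw]
    rw [← Finset.sum_filter]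
    refine Finset.sum_equiv σ (fun i => by simp) (fun i hi => ?_)
    simp [Matrix.vecMulVec_apply, hUdef, Matrix.IsHermitian.eigenvectorUnitary_apply]
  have hppos : ∀ j, (0 : ℂ) ≤ p j := by
    intro j; by_cases hj : ((σ.symm j : Fin N) : ℕ) < M <;> simp [hpdef, hj]
  have hp1 : ∀ j, (0 : ℂ) ≤ 1 - p j := by
    intro j; by_cases hj : ((σ.symm j : Fin N) : ℕ) < M <;> simp [hpdef, hj]
  have hPpsd : P.PosSemidef := Matrix.PosSemidef.diagonal hppos
  have h1P : (1 : Matrix (Fin N) (Fin N) ℂ) - P = Matrix.diagonal (fun j => 1 - p j) := by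
    rw [hPdef, ← Matrix.diagonal_one, Matrix.diagonal_sub]
  have h1Ppsd : ((1 : Matrix (Fin N) (Fin N) ℂ) - P).PosSemidef := by
    rw [h1P]; exact Matrix.PosSemidef.diagonal hp1
  have hRstar_psd : Rstar.PosSemidef := by
    rw [hRP]; exact hPpsd.mul_mul_conjTranspose_same U
  have h1Rstar : (1 : Matrix (Fin N) (Fin N) ℂ) - Rstar
      = U * ((1 : Matrix (Fin N) (Fin N) ℂ) - P) * star U := by
    rw [hRP, Matrix.mul_sub, Matrix.mul_one, Matrix.sub_mul, hU2]
  have h1Rstar_psd : ((1 : Matrix (Fin N) (Fin N) ℂ) - Rstar).PosSemidef := by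
    rw [h1Rstar]; exact h1Ppsd.mul_mul_conjTranspose_same U
  -- card of the shifted filter
  have hcard2 : (Finset.univ.filter
      (fun j : Fin N => ((σ.symm j : Fin N) : ℕ) < M)).card = M := by
    have hmap : Finset.univ.filter (fun j : Fin N => ((σ.symm j : Fin N) : ℕ) < M)
        = Finset.map σ.toEmbedding (Finset.univ.filter (fun i : Fin N => (i : ℕ) < M)) := by
      ext j
      simp only [Finset.mem_filter, Finset.mem_univ, true_and, Finset.mem_map,
        Equiv.coe_toEmbedding]
      constructor
      · intro hj; exact ⟨σ.symm j, hj, by simp⟩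
      · rintro ⟨i, hi, rfl⟩; simpa using hi
    rw [hmap, Finset.card_map, card_lt_filter hMN.le]
  have htrP : Matrix.trace P = (M : ℂ) := by
    rw [hPdef, Matrix.trace_diagonal, hpdef]
    rw [Finset.sum_boole, hcard2]
  have htrRstar : Matrix.trace Rstar = (M : ℂ) := by
    rw [hRP, Matrix.trace_mul_cycle, hU1, Matrix.one_mul, htrP]
  -- general trace transfer
  have htrmul : ∀ X : Matrix (Fin N) (Fin N) ℂ,
      Matrix.trace (X * C) = ∑ j, (star U * X * U) j j * (hC.eigenvalues j : ℂ) := by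
    intro X
    have h1 : Matrix.trace (X * C) = Matrix.trace ((star U * X * U) * D) := by
      rw [hspec, show X * (U * D * star U) = X * (U * D) * star U by
        simp only [Matrix.mul_assoc], Matrix.trace_mul_cycle]
      congr 1
      simp only [Matrix.mul_assoc]
    rw [h1, hDdef]
    simp [Matrix.trace, Matrix.diag, Matrix.mul_diagonal]
  have hconjRstar : star U * Rstar * U = P := by
    rw [hRP]
    simp only [Matrix.mul_assoc]
    rw [hU1, Matrix.mul_one, ← Matrix.mul_assoc, hU1, Matrix.one_mul]
  -- value of the maximum
  set V : ℝ := ∑ i ∈ Finset.univ.filter (fun i : Fin N => (i : ℕ) < M), μ i with hV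
  have hvalRstar : Matrix.trace (Rstar * C) = (V : ℂ) := by
    rw [htrmul Rstar, hconjRstar]
    have hterm : ∀ j, P j j * (hC.eigenvalues j : ℂ)
        = if ((σ.symm j : Fin N) : ℕ) < M then ((hC.eigenvalues j : ℝ) : ℂ) else 0 := by
      intro j
      rw [hPdef, Matrix.diagonal_apply_eq]
      by_cases hj : ((σ.symm j : Fin N) : ℕ) < M <;> simp [hpdef, hj]
    simp_rw [hterm]
    rw [← Finset.sum_filter, hV]
    push_cast
    refine (Finset.sum_equiv σ (fun i => by simp) (fun i hi => ?_)).symm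
    rw [hμσ]; rfl
  have hvalRstar_re : (Matrix.trace (Rstar * C)).re = V := by
    rw [hvalRstar, Complex.ofReal_re]
  -- the common analysis of a feasible R
  have hmain : ∀ R : Matrix (Fin N) (Fin N) ℂ,
      R.PosSemidef → ((1 : Matrix (Fin N) (Fin N) ℂ) - R).PosSemidef →
      Matrix.trace R = (M : ℂ) →
      ((Matrix.trace (R * C)).re ≤ V ∧
        ((Matrix.trace (R * C)).re = V → R = Rstar)) := by
    intro R hRpsd h1Rpsd htrR
    set S : Matrix (Fin N) (Fin N) ℂ := star U * R * U with hS
    have hSpsd : S.PosSemidef := by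
      rw [hS]
      have := hRpsd.mul_mul_conjTranspose_same (star U)
      simpa [Matrix.star_eq_conjTranspose, Matrix.conjTranspose_conjTranspose] using this
    have h1S : (1 : Matrix (Fin N) (Fin N) ℂ) - S
        = star U * ((1 : Matrix (Fin N) (Fin N) ℂ) - R) * U := by
      rw [hS, Matrix.mul_sub, Matrix.mul_one, Matrix.sub_mul, hU1]
    have h1Spsd : ((1 : Matrix (Fin N) (Fin N) ℂ) - S).PosSemidef := by
      rw [h1S]
      have := h1Rpsd.mul_mul_conjTranspose_same (star U)
      simpa [Matrix.star_eq_conjTranspose, Matrix.conjTranspose_conjTranspose] using this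
    have htrS : Matrix.trace S = (M : ℂ) := by
      rw [hS, Matrix.trace_mul_cycle, hU2, Matrix.one_mul, htrR]
    have hdiag : ∀ j, (S j j).im = 0 ∧ 0 ≤ (S j j).re ∧ (S j j).re ≤ 1 := by
      intro j
      have h0 : (0 : ℂ) ≤ S j j := psd_diag hSpsd j
      have h1' : (0 : ℂ) ≤ ((1 : Matrix (Fin N) (Fin N) ℂ) - S) j j := psd_diag h1Spsd j
      rw [Matrix.sub_apply, Matrix.one_apply_eq] at h1'
      rw [Complex.le_def] at h0 h1'
      refine ⟨by simpa using h0.2.symm, by simpa using h0.1, ?_⟩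
      have := h1'.1
      simp [Complex.sub_re] at this
      linarith
    set t : Fin N → ℝ := fun i => (S (σ i) (σ i)).re with ht
    have ht0 : ∀ i, 0 ≤ t i := fun i => (hdiag (σ i)).2.1
    have ht1 : ∀ i, t i ≤ 1 := fun i => (hdiag (σ i)).2.2
    have htsum : ∑ i, t i = (M : ℝ) := by
      have h1 : ∑ i, t i = ∑ j, (S j j).re := Equiv.sum_comp σ (fun j => (S j j).re)
      have h2 : ∑ j, (S j j).re = (Matrix.trace S).re := by
        rw [Matrix.trace]
        simp [Matrix.diag, Complex.re_sum]
      rw [h1, h2, htrS]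
      simp
    have hre : (Matrix.trace (R * C)).re = ∑ i, t i * μ i := by
      rw [htrmul R, Complex.re_sum]
      have hterm : ∀ j, ((star U * R * U) j j * (hC.eigenvalues j : ℂ)).re
          = (S j j).re * hC.eigenvalues j := by
        intro j
        rw [← hS]
        simp [Complex.mul_re]
      simp_rw [hterm]
      rw [← Equiv.sum_comp σ (fun j => (S j j).re * hC.eigenvalues j)]
      refine Finset.sum_congr rfl (fun i _ => ?_)
      rw [ht, hμσ]; rfl
    obtain ⟨hle, huniq⟩ := key_real hM hMN μ hμ hgap t ht0 ht1 htsum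
    constructor
    · rw [hre]; exact hle
    · intro heq
      have hteq := huniq (by rw [← hre, heq, hV])
      have hSdiag : ∀ j, S j j = p j := by
        intro j
        have h1 : t (σ.symm j) = (S j j).re := by rw [ht]; simp
        have h2 := hteq (σ.symm j)
        apply Complex.ext
        · rw [← h1, h2, hpdef]
          by_cases hj : ((σ.symm j : Fin N) : ℕ) < M <;> simp [hj]
        · rw [(hdiag j).1, hpdef]
          by_cases hj : ((σ.symm j : Fin N) : ℕ) < M <;> simp [hj]
      have hSP : S = P := by
        ext i j
        by_cases hj : ((σ.symm j : Fin N) : ℕ) < M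
        · have hz : ((1 : Matrix (Fin N) (Fin N) ℂ) - S) j j = 0 := by
            rw [Matrix.sub_apply, Matrix.one_apply_eq, hSdiag j, hpdef]
            simp [hj]
          have hz2 := psd_entry_zero h1Spsd hz i
          rw [Matrix.sub_apply, sub_eq_zero] at hz2
          rw [← hz2]
          by_cases hij : i = j
          · subst hij
            simp [Matrix.one_apply_eq, hPdef, Matrix.diagonal_apply_eq, hpdef, hj]
          · simp [Matrix.one_apply_ne hij, hPdef, Matrix.diagonal_apply_ne _ hij]
        · have hz : S j j = 0 := by
            rw [hSdiag j, hpdef]; simp [hj]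
          have hz2 := psd_entry_zero hSpsd hz i
          rw [hz2]
          by_cases hij : i = j
          · subst hij
            simp [hPdef, Matrix.diagonal_apply_eq, hpdef, hj]
          · simp [hPdef, Matrix.diagonal_apply_ne _ hij]
      have hRS : U * S * star U = R := by
        rw [hS]
        simp only [Matrix.mul_assoc]
        rw [hU2, Matrix.mul_one, ← Matrix.mul_assoc, hU2, Matrix.one_mul]
      rw [← hRS, hSP, ← hRP]
  refine ⟨hRstar_psd, h1Rstar_psd, htrRstar, ?_, ?_⟩
  · intro R hR h1R htr
    rw [hvalRstar_re]
    exact (hmain R hR h1R htr).1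
  · intro R hR h1R htr heq
    rw [hvalRstar_re] at heq
    exact (hmain R hR h1R htr).2 heq
end
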